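/- arXiv:2504.17217 — 2 statements merged into one kernel-verified Lean document; each statement's English description precedes it below -/
import Mathlib

section
/- Let k be a field, A and B be k-algebras, I an ideal of A, J an ideal of B, and L, N finitely generated modules over A and B respectively. Set 𝓘 = I ⊗_k B + A ⊗_k J (an ideal of A ⊗_k B). Then 𝓘(L ⊗_k N) = L ⊗_k N if and only if IL = L or JN = N. -/
open TensorProduct CategoryTheory DirectSum

section TensorModule

variable (k A B L N : Type) [CommRing k] [CommRing A] [CommRing B]
  [Algebra k A] [Algebra k B]
  [AddCommGroup L] [Module k L] [Module A L] [IsScalarTower k A L]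
  [AddCommGroup N] [Module k N] [Module B N] [IsScalarTower k B N]

/-- `f ↦ 1 ⊗ f` as a ring homomorphism on endomorphisms. -/
noncomputable def lTensorRingHom : Module.End k N →+* Module.End k (L ⊗[k] N) where
  toFun f := LinearMap.lTensor L f
  map_one' := LinearMap.lTensor_id L N
  map_mul' f g := by simpa [Module.End.mul_eq_comp] using (LinearMap.lTensor_comp L f g)
  map_zero' := LinearMap.lTensor_zero L
  map_add' f g := LinearMap.lTensor_add L f g

/-- The right-factor action of `B` on `L ⊗[k] N`. -/
noncomputable def TensorProduct.rightModule : Module B (L ⊗[k] N) :=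
  Module.compHom _ ((lTensorRingHom k L N).comp (Module.toModuleEnd k N))

/-- The canonical `A ⊗[k] B`-module structure on `L ⊗[k] N`, for `L` an `A`-module and `N` a
`B`-module; it satisfies `(a ⊗ₜ b) • (l ⊗ₜ n) = (a • l) ⊗ₜ (b • n)`, see
`TensorProduct.tensorModule_smul_tmul`. -/
noncomputable def TensorProduct.tensorModule : Module (A ⊗[k] B) (L ⊗[k] N) :=
  letI instB : Module B (L ⊗[k] N) := TensorProduct.rightModule k B L N
  haveI smulB : ∀ (b : B) (x : L ⊗[k] N),
      b • x = LinearMap.lTensor L (Module.toModuleEnd k N b) x := fun _ _ => rfl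
  letI : IsScalarTower k B (L ⊗[k] N) :=
    ⟨fun c b x => by
      rw [smulB, smulB]
      have h : Module.toModuleEnd k N ((c • b : B)) = c • Module.toModuleEnd k N b := by
        ext n
        show (c • b) • n = c • b • n
        rw [smul_assoc]
      rw [h, LinearMap.lTensor_smul, LinearMap.smul_apply]⟩
  letI : SMulCommClass A B (L ⊗[k] N) :=
    ⟨fun a b x => by
      induction x with
      | zero => simp
      | tmul l n =>
        simp only [smulB, TensorProduct.smul_tmul', LinearMap.lTensor_tmul,
          LinearMap.map_smul]
      | add x y hx hy =>
        rw [smul_add, smul_add, hx, hy, smul_add, smul_add]⟩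
  TensorProduct.Algebra.module (R := k) (A := A) (B := B) (M := L ⊗[k] N)

theorem TensorProduct.tensorModule_smul_tmul (a : A) (b : B) (l : L) (n : N) :
    letI := TensorProduct.tensorModule k A B L N
    (a ⊗ₜ[k] b) • (l ⊗ₜ[k] n) = (a • l) ⊗ₜ[k] (b • n) := by
  letI := TensorProduct.rightModule k B L N
  show a • (l ⊗ₜ[k] (Module.toModuleEnd k N b n)) = (a • l) ⊗ₜ[k] (b • n)
  rw [TensorProduct.smul_tmul']
  rfl

end TensorModule

/-- The ideal `I ⊗ B + A ⊗ J` of `A ⊗[k] B`. -/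
noncomputable def extIdeal (k A B : Type) [CommRing k] [CommRing A] [CommRing B]
    [Algebra k A] [Algebra k B] (I : Ideal A) (J : Ideal B) : Ideal (A ⊗[k] B) :=
  Ideal.map (algebraMap A (A ⊗[k] B)) I ⊔
    Ideal.map (Algebra.TensorProduct.includeRight (R := k) (A := A) (B := B)).toRingHom J

set_option maxHeartbeats 1000000 in
/-- For `𝓘 = I ⊗ B + A ⊗ J`, one has `𝓘 (L ⊗ N) = L ⊗ N` if and only if `IL = L` or
`JN = N`. -/
theorem extIdeal_smul_top_iff
    (k A B : Type) [Field k] [CommRing A] [CommRing B] [Algebra k A] [Algebra k B]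
    (I : Ideal A) (J : Ideal B)
    (L N : Type)
    [AddCommGroup L] [Module k L] [Module A L] [IsScalarTower k A L]
    [AddCommGroup N] [Module k N] [Module B N] [IsScalarTower k B N]
    [Module.Finite A L] [Module.Finite B N] :
    letI := TensorProduct.tensorModule k A B L N
    (extIdeal k A B I J • (⊤ : Submodule (A ⊗[k] B) (L ⊗[k] N)) = ⊤ ↔
      I • (⊤ : Submodule A L) = ⊤ ∨ J • (⊤ : Submodule B N) = ⊤) := by
  letI := TensorProduct.tensorModule k A B L N
  constructor
  · intro h
    by_contra hc
    push_neg at hc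
    obtain ⟨hI, hJ⟩ := hc
    set p : Submodule k L := (I • ⊤ : Submodule A L).restrictScalars k with hp_def
    set q : Submodule k N := (J • ⊤ : Submodule B N).restrictScalars k with hq_def
    have hp : p ≠ ⊤ := fun h' => hI (by
      rwa [hp_def, Submodule.restrictScalars_eq_top_iff] at h')
    have hq : q ≠ ⊤ := fun h' => hJ (by
      rwa [hq_def, Submodule.restrictScalars_eq_top_iff] at h')
    haveI : Nontrivial (L ⧸ p) :=
      Submodule.Quotient.nontrivial_iff.2 hp
    haveI : Nontrivial (N ⧸ q) :=
      Submodule.Quotient.nontrivial_iff.2 hq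
    set φ : L ⊗[k] N →ₗ[k] (L ⧸ p) ⊗[k] (N ⧸ q) := TensorProduct.map p.mkQ q.mkQ with hφ
    let K : Ideal (A ⊗[k] B) :=
      { carrier := {r | ∀ m : L ⊗[k] N, φ (r • m) = 0}
        add_mem' := fun {r s} hr hs m => by rw [add_smul, map_add, hr, hs, add_zero]
        zero_mem' := fun m => by rw [zero_smul, map_zero]
        smul_mem' := fun c r hr m => by
          rw [smul_eq_mul, mul_comm, mul_smul]; exact hr (c • m) }
    have hK : extIdeal k A B I J ≤ K := by
      refine sup_le (Ideal.map_le_iff_le_comap.2 fun i hi => ?_)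
        (Ideal.map_le_iff_le_comap.2 fun j hj => ?_)
      · intro m
        induction m with
        | zero => rw [smul_zero, map_zero]
        | tmul l n =>
          have h1 : (algebraMap A (A ⊗[k] B) i) • (l ⊗ₜ[k] n) = (i • l) ⊗ₜ[k] n := by
            have := TensorProduct.tensorModule_smul_tmul k A B L N i 1 l n
            simpa using this
          have hmem : i • l ∈ p :=
            (Submodule.restrictScalars_mem k _ _).2 (Submodule.smul_mem_smul hi Submodule.mem_top)
          rw [h1, hφ, TensorProduct.map_tmul,
            show p.mkQ (i • l) = 0 from (Submodule.Quotient.mk_eq_zero _).2 hmem,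
            TensorProduct.zero_tmul]
        | add x y hx hy => rw [smul_add, map_add, hx, hy, add_zero]
      · intro m
        induction m with
        | zero => rw [smul_zero, map_zero]
        | tmul l n =>
          have h1 : ((Algebra.TensorProduct.includeRight (R := k) (A := A)
              (B := B)).toRingHom j) • (l ⊗ₜ[k] n) = l ⊗ₜ[k] (j • n) := by
            have := TensorProduct.tensorModule_smul_tmul k A B L N 1 j l n
            simpa using this
          have hmem : j • n ∈ q :=
            (Submodule.restrictScalars_mem k _ _).2 (Submodule.smul_mem_smul hj Submodule.mem_top)
          rw [h1, hφ, TensorProduct.map_tmul,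
            show q.mkQ (j • n) = 0 from (Submodule.Quotient.mk_eq_zero _).2 hmem,
            TensorProduct.tmul_zero]
        | add x y hx hy => rw [smul_add, map_add, hx, hy, add_zero]
    have hzero : ∀ x : L ⊗[k] N, φ x = 0 := fun x => by
      have hx : x ∈ extIdeal k A B I J • (⊤ : Submodule (A ⊗[k] B) (L ⊗[k] N)) := by
        rw [h]; exact Submodule.mem_top
      exact Submodule.smul_induction_on hx (fun r hr m _ => hK hr m)
        (fun x y hx hy => by rw [map_add, hx, hy, add_zero])
    have hsurj : Function.Surjective φ :=
      TensorProduct.map_surjective (Submodule.mkQ_surjective p) (Submodule.mkQ_surjective q)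
    have hsub : Subsingleton ((L ⧸ p) ⊗[k] (N ⧸ q)) := by
      refine ⟨fun a b => ?_⟩
      obtain ⟨x, rfl⟩ := hsurj a
      obtain ⟨y, rfl⟩ := hsurj b
      rw [hzero, hzero]
    have hnt : Nontrivial ((L ⧸ p) ⊗[k] (N ⧸ q)) := by
      rw [← not_subsingleton_iff_nontrivial, ← rank_zero_iff (R := k), rank_tensorProduct',
        mul_eq_zero, not_or, rank_zero_iff, rank_zero_iff,
        not_subsingleton_iff_nontrivial, not_subsingleton_iff_nontrivial]
      exact ⟨‹_›, ‹_›⟩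
    exact (not_subsingleton_iff_nontrivial.mpr hnt) hsub
  · intro h
    rw [eq_top_iff]
    rintro x -
    induction x with
    | zero => exact zero_mem _
    | add x y hx hy => exact add_mem hx hy
    | tmul l n =>
      rcases h with h | h
      · have hl : l ∈ I • (⊤ : Submodule A L) := by rw [h]; exact Submodule.mem_top
        refine Submodule.smul_induction_on hl (fun i hi m _ => ?_) (fun x y hx hy => ?_)
        · have h1 : (i • m) ⊗ₜ[k] n = (algebraMap A (A ⊗[k] B) i) • (m ⊗ₜ[k] n) := by
            have := TensorProduct.tensorModule_smul_tmul k A B L N i 1 m n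
            simpa using this.symm
          rw [h1]
          exact Submodule.smul_mem_smul (le_sup_left (α := Ideal (A ⊗[k] B))
            (Ideal.mem_map_of_mem _ hi)) Submodule.mem_top
        · rw [TensorProduct.add_tmul]; exact add_mem hx hy
      · have hn : n ∈ J • (⊤ : Submodule B N) := by rw [h]; exact Submodule.mem_top
        refine Submodule.smul_induction_on hn (fun j hj m _ => ?_) (fun x y hx hy => ?_)
        · have h1 : l ⊗ₜ[k] (j • m) = ((Algebra.TensorProduct.includeRight (R := k)
              (A := A) (B := B)).toRingHom j) • (l ⊗ₜ[k] m) := by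
            have := TensorProduct.tensorModule_smul_tmul k A B L N 1 j l m
            simpa using this.symm
          rw [h1]
          exact Submodule.smul_mem_smul (le_sup_right (α := Ideal (A ⊗[k] B))
            (Ideal.mem_map_of_mem _ hj)) Submodule.mem_top
        · rw [TensorProduct.tmul_add]; exact add_mem hx hy
end

section
/- Let (A, 𝔪) and (B, 𝔫) be local algebras over a field k that both have residue field k, and suppose either A or B is algebraic over k. Then A ⊗_k B is a local ring with unique maximal ideal 𝔪 ⊗_k B + A ⊗_k 𝔫. -/
/-!
If `𝔪` is nil, the residue map of `A` induces a surjection `A ⊗[k] B → k ⊗[k] B = B` whose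
kernel `𝔪 ⊗ B` is nil, so `A ⊗[k] B` is a nil thickening of the local ring `B`: it is local,
and its maximal ideal is the preimage of `𝔫`, i.e. the kernel of `A ⊗[k] B → k ⊗[k] k = k`,
which is `𝔪 ⊗ B + A ⊗ 𝔫`. An algebraic `k`-algebra is integral over `k`, hence
zero-dimensional, so when it is local its maximal ideal is nil.
-/

open TensorProduct CategoryTheory DirectSum

open IsLocalRing

theorem Ring.KrullDimLE.of_isIntegral (R S : Type*) [CommRing R] [CommRing S] [Algebra R S]
    [Ring.KrullDimLE 0 R] [Algebra.IsIntegral R S] : Ring.KrullDimLE 0 S :=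
  .mk₀ fun I _ ↦ Ideal.isMaximal_of_isIntegral_of_isMaximal_comap (R := R) I inferInstance

theorem Ideal.map_le_nilradical {R S : Type*} [CommRing R] [CommRing S] (f : R →+* S)
    {I : Ideal R} (hI : I ≤ nilradical R) : I.map f ≤ nilradical S :=
  Ideal.map_le_iff_le_comap.mpr fun _ hx ↦ mem_nilradical.mpr ((mem_nilradical.mp (hI hx)).map f)

theorem isLocalHom_of_surjective_of_ker_le_nilradical {R S : Type*} [CommRing R] [CommRing S]
    (f : R →+* S) (hf : Function.Surjective f) (hker : RingHom.ker f ≤ nilradical R) :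
    IsLocalHom f where
  map_nonunit x hx := by
    obtain ⟨y, hy⟩ := hf ↑hx.unit⁻¹
    have hnil : IsNilpotent (x * y - 1) := hker (by simp [hy])
    exact isUnit_of_mul_isUnit_left (by simpa using hnil.isUnit_add_one)

theorem exists_isLocalRing_maximalIdeal_eq_ker_comp {R S K : Type*} [CommRing R] [CommRing S]
    [Semiring K] [IsLocalRing S] (f : R →+* S) (hf : Function.Surjective f)
    (hker : RingHom.ker f ≤ nilradical R) (g : S →+* K) (hg : RingHom.ker g = maximalIdeal S) :
    ∃ h : IsLocalRing R, @maximalIdeal R _ h = RingHom.ker (g.comp f) := by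
  have := isLocalHom_of_surjective_of_ker_le_nilradical f hf hker
  have := f.domain_isLocalRing
  exact ⟨this, by rw [← RingHom.comap_ker, hg, maximalIdeal_comap]⟩

section ResidueAlgHom

variable {k A : Type*} [CommRing k] [CommRing A] [Algebra k A] [IsLocalRing A]

noncomputable def residueAlgHom (hres : Function.Bijective (algebraMap k (A ⧸ maximalIdeal A))) :
    A →ₐ[k] k :=
  (AlgEquiv.ofBijective (Algebra.ofId k _) hres).symm.toAlgHom.comp (Ideal.Quotient.mkₐ k _)

variable (hres : Function.Bijective (algebraMap k (A ⧸ maximalIdeal A)))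

theorem residueAlgHom_surjective : Function.Surjective (residueAlgHom hres) :=
  (AlgEquiv.ofBijective _ hres).symm.surjective.comp (Ideal.Quotient.mkₐ_surjective k _)

theorem ker_residueAlgHom : RingHom.ker (residueAlgHom hres) = maximalIdeal A := by
  rw [residueAlgHom, AlgHom.ker_coe, AlgHom.comp_toRingHom,
    RingHom.ker_comp_of_injective _ (AlgEquiv.injective _)]
  exact Ideal.mk_ker

end ResidueAlgHom

section TensorProduct

variable {k A B : Type} [CommRing k] [CommRing A] [CommRing B] [Algebra k A] [Algebra k B]
  {ρA : A →ₐ[k] k} {ρB : B →ₐ[k] k}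

theorem ker_lid_comp_map (hA : Function.Surjective ρA) (hB : Function.Surjective ρB) :
    RingHom.ker ((Algebra.TensorProduct.lid k k).toAlgHom.comp (Algebra.TensorProduct.map ρA ρB))
      = extIdeal k A B (RingHom.ker ρA) (RingHom.ker ρB) := by
  rw [AlgHom.ker_coe, AlgHom.comp_toRingHom,
    RingHom.ker_comp_of_injective _ (AlgEquiv.injective _), ← AlgHom.ker_coe,
    Algebra.TensorProduct.map_ker _ _ hA hB]
  rfl

theorem exists_isLocalRing_tensorProduct_of_surjective {C : Type} [CommRing C] [Algebra k C]
    [IsLocalRing C] (hA : Function.Surjective ρA) (hB : Function.Surjective ρB)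
    (φ : A ⊗[k] B →ₐ[k] C) (hφ : Function.Surjective φ)
    (hker : RingHom.ker φ ≤ nilradical (A ⊗[k] B)) (ρ : C →ₐ[k] k)
    (hρ : RingHom.ker ρ = maximalIdeal C)
    (hcomp : ρ.comp φ = (Algebra.TensorProduct.lid k k).toAlgHom.comp
      (Algebra.TensorProduct.map ρA ρB)) :
    ∃ h : IsLocalRing (A ⊗[k] B), @maximalIdeal _ _ h =
      extIdeal k A B (RingHom.ker ρA) (RingHom.ker ρB) := by
  obtain ⟨h, hmax⟩ := exists_isLocalRing_maximalIdeal_eq_ker_comp φ.toRingHom hφ hker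
    ρ.toRingHom hρ
  refine ⟨h, hmax.trans ?_⟩
  change RingHom.ker (ρ.comp φ) = _
  rw [hcomp, ker_lid_comp_map hA hB]

theorem exists_isLocalRing_tensorProduct_of_ker_le_nilradical_left [IsLocalRing B]
    (hA : Function.Surjective ρA) (hB : Function.Surjective ρB)
    (hkerB : RingHom.ker ρB = maximalIdeal B) (hnil : RingHom.ker ρA ≤ nilradical A) :
    ∃ h : IsLocalRing (A ⊗[k] B), @maximalIdeal _ _ h =
      extIdeal k A B (RingHom.ker ρA) (RingHom.ker ρB) := by
  let φ : A ⊗[k] B →ₐ[k] B :=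
    (Algebra.TensorProduct.lid k B).toAlgHom.comp (Algebra.TensorProduct.map ρA (AlgHom.id k B))
  refine exists_isLocalRing_tensorProduct_of_surjective hA hB φ ?_ ?_ ρB hkerB ?_
  · exact (Algebra.TensorProduct.lid k B).surjective.comp
      (Algebra.TensorProduct.map_surjective _ (AlgHom.id k B) hA Function.surjective_id)
  · rw [AlgHom.ker_coe, AlgHom.comp_toRingHom,
      RingHom.ker_comp_of_injective _ (AlgEquiv.injective _), ← AlgHom.ker_coe,
      Algebra.TensorProduct.rTensor_ker _ hA]
    exact Ideal.map_le_nilradical _ hnil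
  · ext <;> simp [φ]

theorem exists_isLocalRing_tensorProduct_of_ker_le_nilradical_right [IsLocalRing A]
    (hA : Function.Surjective ρA) (hB : Function.Surjective ρB)
    (hkerA : RingHom.ker ρA = maximalIdeal A) (hnil : RingHom.ker ρB ≤ nilradical B) :
    ∃ h : IsLocalRing (A ⊗[k] B), @maximalIdeal _ _ h =
      extIdeal k A B (RingHom.ker ρA) (RingHom.ker ρB) := by
  let φ : A ⊗[k] B →ₐ[k] A :=
    (Algebra.TensorProduct.rid k k A).toAlgHom.comp (Algebra.TensorProduct.map (AlgHom.id k A) ρB)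
  refine exists_isLocalRing_tensorProduct_of_surjective hA hB φ ?_ ?_ ρA hkerA ?_
  · exact (Algebra.TensorProduct.rid k k A).surjective.comp
      (Algebra.TensorProduct.map_surjective (AlgHom.id k A) _ Function.surjective_id hB)
  · rw [AlgHom.ker_coe, AlgHom.comp_toRingHom,
      RingHom.ker_comp_of_injective _ (AlgEquiv.injective _), ← AlgHom.ker_coe,
      Algebra.TensorProduct.lTensor_ker _ hB]
    exact Ideal.map_le_nilradical _ hnil
  · ext <;> simp [φ, mul_comm]

end TensorProduct

/-- If `(A, 𝔪)` and `(B, 𝔫)` are local `k`-algebras with residue field `k` and one of them is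
algebraic over `k`, then `A ⊗[k] B` is local with maximal ideal `𝔪 ⊗ B + A ⊗ 𝔫`. -/
theorem tensor_isLocalRing
    (k A B : Type) [Field k] [CommRing A] [CommRing B] [Algebra k A] [Algebra k B]
    [IsLocalRing A] [IsLocalRing B]
    (hresA : Function.Bijective (algebraMap k (A ⧸ IsLocalRing.maximalIdeal A)))
    (hresB : Function.Bijective (algebraMap k (B ⧸ IsLocalRing.maximalIdeal B)))
    (halg : Algebra.IsAlgebraic k A ∨ Algebra.IsAlgebraic k B) :
    ∃ h : IsLocalRing (A ⊗[k] B),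
      @IsLocalRing.maximalIdeal (A ⊗[k] B) _ h =
        extIdeal k A B (IsLocalRing.maximalIdeal A) (IsLocalRing.maximalIdeal B) := by
  have hA := residueAlgHom_surjective hresA
  have hB := residueAlgHom_surjective hresB
  rw [← ker_residueAlgHom hresA, ← ker_residueAlgHom hresB]
  rcases halg with halg | halg
  · have := Ring.KrullDimLE.of_isIntegral k A
    refine exists_isLocalRing_tensorProduct_of_ker_le_nilradical_left hA hB
      (ker_residueAlgHom hresB) ?_
    rw [ker_residueAlgHom, Ring.KrullDimLE.nilradical_eq_maximalIdeal]
  · have := Ring.KrullDimLE.of_isIntegral k B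
    refine exists_isLocalRing_tensorProduct_of_ker_le_nilradical_right hA hB
      (ker_residueAlgHom hresA) ?_
    rw [ker_residueAlgHom, Ring.KrullDimLE.nilradical_eq_maximalIdeal]
end
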